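/- Let T = B₊(T₁⋯T_k) be a plane tree. The polynomial χ_T(t) = (-1)^{|T|} Γ_T(-t), where Γ_T is the quasi-symmetric generating function of linear extensions of T evaluated at the binomial element t, satisfies the finite difference equation Δχ_T(t) = χ_{T₁}(t)⋯χ_{T_k}(t), where Δf(t) = f(t+1) − f(t). -/

import Mathlib

/-- Plane trees: a node with an ordered (possibly empty) list of subtrees. -/
inductive PlaneTree : Type
  | node : List PlaneTree → PlaneTree

namespace PlaneTree

mutual
  /-- Number of nodes of a plane tree. -/
  def sizeT : PlaneTree → ℕ
    | .node ts => 1 + sizeF ts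
  /-- Number of nodes of a plane forest. -/
  def sizeF : List PlaneTree → ℕ
    | [] => 0
    | t :: ts => sizeT t + sizeF ts
end

/-- `PosT t p` : `p` (a path of child indices) is the position of a node of the tree `t`. -/
inductive PosT : PlaneTree → List ℕ → Prop
  | root (ts : List PlaneTree) : PosT (.node ts) []
  | child {ts : List PlaneTree} {t : PlaneTree} {i : ℕ} {q : List ℕ} :
      ts[i]? = some t → PosT t q → PosT (.node ts) (i :: q)

/-- Positions of the nodes of a forest: a tree index followed by a path in that tree.
A position `q` that strictly extends `p` is a (strict) descendant of `p`; in the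
forest poset (roots maximal) this means `q <_F p`. -/
def PosF (F : List PlaneTree) : List ℕ → Prop
  | [] => False
  | i :: q => ∃ t, F[i]? = some t ∧ PosT t q

/-- `χ_F(m)`: the number of strictly increasing (from roots to leaves read downwards,
i.e. a strict descendant has a strictly smaller label than its ancestor — labels strictly
increase from bottom to top) labellings of the forest `F` with labels in `{1,…,m}`.
For a tree `T` this is the polynomial `χ_T(t) = (-1)^{|T|} Γ_T(-t) = ⟨Y_T, λ₁ᵗ⟩`
evaluated at `t = m`, and `χ` is multiplicative on forests. -/
noncomputable def chiCount (F : List PlaneTree) (m : ℕ) : ℕ :=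
  Set.ncard {ℓ : List ℕ → ℕ |
    (∀ p, ¬ PosF F p → ℓ p = 0) ∧
    (∀ p, PosF F p → 1 ≤ ℓ p ∧ ℓ p ≤ m) ∧
    (∀ p q, PosF F p → PosF F q → p <+: q → p ≠ q → ℓ q < ℓ p)}

lemma posF_nil (F : List PlaneTree) : ¬ PosF F [] := fun h => h

lemma posF_cons_zero (t : PlaneTree) (ts : List PlaneTree) (q : List ℕ) :
    PosF (t :: ts) (0 :: q) ↔ PosT t q := by
  simp [PosF]

lemma posF_cons_succ (t : PlaneTree) (ts : List PlaneTree) (i : ℕ) (q : List ℕ) :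
    PosF (t :: ts) ((i+1) :: q) ↔ PosF ts (i :: q) := Iff.rfl

lemma posF_single_succ (t : PlaneTree) (i : ℕ) (q : List ℕ) :
    ¬ PosF [t] ((i+1) :: q) := by
  rintro ⟨u, hu, -⟩
  simp at hu

lemma posF_nilForest (p : List ℕ) : ¬ PosF ([] : List PlaneTree) p := by
  cases p with
  | nil => exact posF_nil _
  | cons i q => rintro ⟨u, hu, -⟩; simp at hu

lemma posT_node (G : List PlaneTree) (q : List ℕ) :
    PosT (.node G) q ↔ q = [] ∨ PosF G q := by
  constructor
  · rintro (_ | ⟨h1, h2⟩)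
    · exact Or.inl rfl
    · exact Or.inr ⟨_, h1, h2⟩
  · rintro (rfl | h)
    · exact .root G
    · cases q with
      | nil => exact (posF_nil _ h).elim
      | cons i q => obtain ⟨u, hu, hq⟩ := h; exact .child hu hq

lemma posF_node (F : List PlaneTree) (q : List ℕ) :
    PosF [PlaneTree.node F] (0 :: q) ↔ q = [] ∨ PosF F q := by
  rw [posF_cons_zero, posT_node]


lemma finite_posF_aux : ∀ (n : ℕ) (F : List PlaneTree), sizeF F ≤ n → {p | PosF F p}.Finite := by
  intro n
  induction n with
  | zero =>
    intro F hF
    cases F with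
    | nil => exact Set.Finite.subset (Set.finite_empty) (fun p hp => (posF_nilForest p hp).elim)
    | cons t ts =>
      obtain ⟨G⟩ := t
      simp [sizeF, sizeT] at hF
  | succ n ih =>
    intro F hF
    cases F with
    | nil => exact Set.Finite.subset (Set.finite_empty) (fun p hp => (posF_nilForest p hp).elim)
    | cons t ts =>
      obtain ⟨G⟩ := t
      have hsz : sizeF (PlaneTree.node G :: ts) = 1 + sizeF G + sizeF ts := by
        simp [sizeF, sizeT]
      have hG : sizeF G ≤ n := by omega
      have hts : sizeF ts ≤ n := by omega
      have h1 := ih G hG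
      have h2 := ih ts hts
      apply Set.Finite.subset
        (((h1.insert []).image (fun q => 0 :: q)).union
          (h2.image (fun p => (p.headI + 1) :: p.tail)))
      rintro p hp
      cases p with
      | nil => exact (posF_nil (PlaneTree.node G :: ts) hp).elim
      | cons i q =>
        obtain ⟨u, hu, hq⟩ := hp
        cases i with
        | zero =>
          simp only [List.getElem?_cons_zero] at hu
          obtain rfl : PlaneTree.node G = u := by injection hu
          left
          rcases (posT_node G q).1 hq with rfl | h
          · exact ⟨[], Or.inl rfl, rfl⟩
          · exact ⟨q, Or.inr h, rfl⟩
        | succ j =>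
          right
          refine ⟨j :: q, ⟨u, hu, hq⟩, rfl⟩

lemma finite_posF (F : List PlaneTree) : {p | PosF F p}.Finite :=
  finite_posF_aux (sizeF F) F le_rfl

def LSet (F : List PlaneTree) (m : ℕ) : Set (List ℕ → ℕ) :=
  {ℓ : List ℕ → ℕ |
    (∀ p, ¬ PosF F p → ℓ p = 0) ∧
    (∀ p, PosF F p → 1 ≤ ℓ p ∧ ℓ p ≤ m) ∧
    (∀ p q, PosF F p → PosF F q → p <+: q → p ≠ q → ℓ q < ℓ p)}

lemma mem_LSet {F : List PlaneTree} {m : ℕ} {ℓ : List ℕ → ℕ} :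
    ℓ ∈ LSet F m ↔
    (∀ p, ¬ PosF F p → ℓ p = 0) ∧
    (∀ p, PosF F p → 1 ≤ ℓ p ∧ ℓ p ≤ m) ∧
    (∀ p q, PosF F p → PosF F q → p <+: q → p ≠ q → ℓ q < ℓ p) := Iff.rfl

lemma finite_LSet (F : List PlaneTree) (m : ℕ) : (LSet F m).Finite := by
  have hP : {p | PosF F p}.Finite := finite_posF F
  haveI := hP.to_subtype
  apply Set.Finite.of_finite_image
     (f := fun ℓ => (fun p : {p | PosF F p} => (⟨min (ℓ p) m, by omega⟩ : Fin (m+1))))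
  · exact Set.toFinite _
  · rintro ℓ₁ ⟨z₁, b₁, -⟩ ℓ₂ ⟨z₂, b₂, -⟩ h
    funext p
    by_cases hp : PosF F p
    · have := congrFun h ⟨p, hp⟩
      simp only [Fin.mk.injEq] at this
      have e1 := (b₁ p hp).2
      have e2 := (b₂ p hp).2
      omega
    · rw [z₁ p hp, z₂ p hp]


lemma chiCount_eq_ncard (F : List PlaneTree) (m : ℕ) : chiCount F m = (LSet F m).ncard := rfl

lemma ncard_prod {α β : Type*} (A : Set α) (B : Set β) :
    (A ×ˢ B).ncard = A.ncard * B.ncard := by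
  rw [← Nat.card_coe_set_eq, ← Nat.card_coe_set_eq, ← Nat.card_coe_set_eq,
      Nat.card_congr (Equiv.Set.prod A B), Nat.card_prod]

lemma LSet_nilForest (m : ℕ) : LSet ([] : List PlaneTree) m = {fun _ => 0} := by
  ext ℓ
  constructor
  · rintro ⟨z, -, -⟩
    funext p
    exact z p (posF_nilForest p)
  · rintro rfl
    exact ⟨fun p _ => rfl, fun p hp => (posF_nilForest p hp).elim,
      fun p q hp _ _ _ => (posF_nilForest p hp).elim⟩

/-- restriction to the first tree of the forest -/
def proj0 (ℓ : List ℕ → ℕ) : List ℕ → ℕ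
  | 0 :: q => ℓ (0 :: q)
  | _ => 0

/-- restriction to the rest of the forest, shifting indices -/
def projS (ℓ : List ℕ → ℕ) : List ℕ → ℕ
  | i :: q => ℓ ((i+1) :: q)
  | [] => 0

/-- combine labellings of a tree and a forest -/
def comb (f g : List ℕ → ℕ) : List ℕ → ℕ
  | [] => 0
  | 0 :: q => f (0 :: q)
  | (i+1) :: q => g (i :: q)

lemma image_proj (t : PlaneTree) (ts : List PlaneTree) (m : ℕ) :
    (fun ℓ => (proj0 ℓ, projS ℓ)) '' LSet (t :: ts) m = LSet [t] m ×ˢ LSet ts m := by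
  ext ⟨f, g⟩
  constructor
  · rintro ⟨ℓ, ⟨z, b, s⟩, h⟩
    simp only [Prod.mk.injEq] at h
    obtain ⟨rfl, rfl⟩ := h
    constructor
    · -- proj0 ℓ ∈ LSet [t] m
      refine ⟨?_, ?_, ?_⟩
      · intro p hp
        match p with
        | [] => rfl
        | (i+1) :: q => rfl
        | 0 :: q =>
          have : ¬ PosT t q := fun h => hp ((posF_cons_zero t [] q).2 h)
          exact z (0 :: q) (fun h => this ((posF_cons_zero t ts q).1 h))
      · rintro p hp
        match p with
        | [] => exact (posF_nil _ hp).elim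
        | (i+1) :: q => exact (posF_single_succ t i q hp).elim
        | 0 :: q =>
          exact b (0 :: q) ((posF_cons_zero t ts q).2 ((posF_cons_zero t [] q).1 hp))
      · rintro p q hp hq hpre hne
        match p, q with
        | 0 :: p', 0 :: q' =>
          have hp' := (posF_cons_zero t ts p').2 ((posF_cons_zero t [] p').1 hp)
          have hq' := (posF_cons_zero t ts q').2 ((posF_cons_zero t [] q').1 hq)
          exact s _ _ hp' hq' hpre hne
        | [], _ => exact (posF_nil _ hp).elim
        | (i+1) :: p', _ => exact (posF_single_succ t i p' hp).elim
        | 0 :: p', [] => exact (posF_nil _ hq).elim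
        | 0 :: p', (j+1) :: q' => exact (posF_single_succ t j q' hq).elim
    · -- projS ℓ ∈ LSet ts m
      refine ⟨?_, ?_, ?_⟩
      · intro p hp
        match p with
        | [] => rfl
        | i :: q => exact z ((i+1) :: q) (fun h => hp ((posF_cons_succ t ts i q).1 h))
      · rintro p hp
        match p with
        | [] => exact (posF_nil _ hp).elim
        | i :: q => exact b ((i+1) :: q) ((posF_cons_succ t ts i q).2 hp)
      · rintro p q hp hq hpre hne
        match p, q with
        | i :: p', j :: q' =>
          obtain ⟨rfl, hpre'⟩ := List.cons_prefix_cons.1 hpre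
          have h1 := (posF_cons_succ t ts i p').2 hp
          have h2 := (posF_cons_succ t ts i q').2 hq
          refine s _ _ h1 h2 (List.cons_prefix_cons.2 ⟨rfl, hpre'⟩) ?_
          simpa using hne
        | [], _ => exact (posF_nil _ hp).elim
        | i :: p', [] => exact (posF_nil _ hq).elim
  · rintro ⟨⟨zf, bf, sf⟩, ⟨zg, bg, sg⟩⟩
    refine ⟨comb f g, ⟨?_, ?_, ?_⟩, ?_⟩
    · intro p hp
      match p with
      | [] => rfl
      | 0 :: q =>
        exact zf (0 :: q) (fun h => hp ((posF_cons_zero t ts q).2 ((posF_cons_zero t [] q).1 h)))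
      | (i+1) :: q =>
        exact zg (i :: q) (fun h => hp ((posF_cons_succ t ts i q).2 h))
    · rintro p hp
      match p with
      | [] => exact (posF_nil _ hp).elim
      | 0 :: q =>
        exact bf (0 :: q) ((posF_cons_zero t [] q).2 ((posF_cons_zero t ts q).1 hp))
      | (i+1) :: q => exact bg (i :: q) ((posF_cons_succ t ts i q).1 hp)
    · rintro p q hp hq hpre hne
      match p, q with
      | [], _ => exact (posF_nil _ hp).elim
      | i :: p', [] => exact (posF_nil _ hq).elim
      | 0 :: p', j :: q' =>
        obtain ⟨rfl, hpre'⟩ := List.cons_prefix_cons.1 hpre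
        have h1 := (posF_cons_zero t [] p').2 ((posF_cons_zero t ts p').1 hp)
        have h2 := (posF_cons_zero t [] q').2 ((posF_cons_zero t ts q').1 hq)
        refine sf _ _ h1 h2 hpre ?_
        exact hne
      | (i+1) :: p', j :: q' =>
        obtain ⟨rfl, hpre'⟩ := List.cons_prefix_cons.1 hpre
        have h1 := (posF_cons_succ t ts i p').1 hp
        have h2 := (posF_cons_succ t ts i q').1 hq
        refine sg _ _ h1 h2 (List.cons_prefix_cons.2 ⟨rfl, hpre'⟩) ?_
        simpa using hne
    · -- proj0 (comb f g) = f ∧ projS (comb f g) = g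
      have e1 : proj0 (comb f g) = f := by
        funext p
        match p with
        | [] => exact (zf [] (posF_nil _)).symm
        | 0 :: q => rfl
        | (i+1) :: q => exact (zf ((i+1) :: q) (posF_single_succ t i q)).symm
      have e2 : projS (comb f g) = g := by
        funext p
        match p with
        | [] => exact (zg [] (posF_nil _)).symm
        | i :: q => rfl
      show (proj0 (comb f g), projS (comb f g)) = (f, g)
      rw [e1, e2]

lemma injOn_proj (t : PlaneTree) (ts : List PlaneTree) (m : ℕ) :
    Set.InjOn (fun ℓ => (proj0 ℓ, projS ℓ)) (LSet (t :: ts) m) := by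
  rintro ℓ₁ ⟨z₁, -, -⟩ ℓ₂ ⟨z₂, -, -⟩ h
  simp only [Prod.mk.injEq] at h
  funext p
  match p with
  | [] => rw [z₁ [] (posF_nil _), z₂ [] (posF_nil _)]
  | 0 :: q => exact congrFun h.1 (0 :: q)
  | (i+1) :: q => exact congrFun h.2 (i :: q)

lemma chiCount_cons (t : PlaneTree) (ts : List PlaneTree) (m : ℕ) :
    chiCount (t :: ts) m = chiCount [t] m * chiCount ts m := by
  rw [chiCount_eq_ncard, chiCount_eq_ncard, chiCount_eq_ncard,
    ← Set.ncard_image_of_injOn (injOn_proj t ts m), image_proj, ncard_prod]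

lemma chiCount_forest (F : List PlaneTree) (m : ℕ) :
    chiCount F m = (F.map (fun t => chiCount [t] m)).prod := by
  induction F with
  | nil => rw [chiCount_eq_ncard, LSet_nilForest]; simp
  | cons t ts ih => rw [chiCount_cons, ih]; simp

/-- remove the root of the unique tree of the forest `[T]` -/
def dropRoot (ℓ : List ℕ → ℕ) : List ℕ → ℕ
  | [] => 0
  | i :: q => ℓ (0 :: i :: q)

/-- add a root labelled `m+1` on top of a forest labelling -/
def addRoot (m : ℕ) (ℓ' : List ℕ → ℕ) : List ℕ → ℕ
  | [] => 0
  | [0] => m + 1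
  | 0 :: i :: q => ℓ' (i :: q)
  | (_+1) :: _ => 0

lemma pos_root (F : List PlaneTree) : PosF [PlaneTree.node F] [0] :=
  (posF_node F []).2 (Or.inl rfl)

lemma pos_nonroot {F : List PlaneTree} {i : ℕ} {q : List ℕ} (h : PosF F (i :: q)) :
    PosF [PlaneTree.node F] (0 :: i :: q) :=
  (posF_node F (i :: q)).2 (Or.inr h)

lemma pos_nonroot' {F : List PlaneTree} {i : ℕ} {q : List ℕ}
    (h : PosF [PlaneTree.node F] (0 :: i :: q)) : PosF F (i :: q) := by
  rcases (posF_node F (i :: q)).1 h with h' | h'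
  · exact absurd h' (List.cons_ne_nil i q)
  · exact h'

lemma root_prefix (i : ℕ) (q : List ℕ) : [0] <+: 0 :: i :: q :=
  List.cons_prefix_cons.2 ⟨rfl, List.nil_prefix⟩

lemma LSet_split (F : List PlaneTree) (m : ℕ) :
    LSet [PlaneTree.node F] (m+1) =
      {ℓ | ℓ ∈ LSet [PlaneTree.node F] (m+1) ∧ ℓ [0] = m + 1} ∪ LSet [PlaneTree.node F] m := by
  ext ℓ
  constructor
  · intro hℓ
    obtain ⟨z, b, s⟩ := hℓ
    have hr := b [0] (pos_root F)
    by_cases hm : ℓ [0] = m + 1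
    · exact Or.inl ⟨⟨z, b, s⟩, hm⟩
    · refine Or.inr ⟨z, ?_, s⟩
      intro p hp
      refine ⟨(b p hp).1, ?_⟩
      match p with
      | [] => exact (posF_nil _ hp).elim
      | (j+1) :: q => exact (posF_single_succ _ j q hp).elim
      | 0 :: [] => omega
      | 0 :: i :: q =>
        have := s [0] (0 :: i :: q) (pos_root F) hp (root_prefix i q) (by simp)
        omega
  · rintro (⟨h, -⟩ | ⟨z, b, s⟩)
    · exact h
    · exact ⟨z, fun p hp => ⟨(b p hp).1, le_trans (b p hp).2 (Nat.le_succ m)⟩, s⟩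

lemma image_dropRoot (F : List PlaneTree) (m : ℕ) :
    dropRoot '' {ℓ | ℓ ∈ LSet [PlaneTree.node F] (m+1) ∧ ℓ [0] = m + 1} = LSet F m := by
  ext g
  constructor
  · rintro ⟨ℓ, ⟨⟨z, b, s⟩, hr⟩, rfl⟩
    refine ⟨?_, ?_, ?_⟩
    · intro p hp
      match p with
      | [] => rfl
      | i :: q =>
        refine z (0 :: i :: q) (fun h => hp (pos_nonroot' h))
    · intro p hp
      match p with
      | [] => exact (posF_nil _ hp).elim
      | i :: q =>
        refine ⟨(b _ (pos_nonroot hp)).1, ?_⟩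
        have := s [0] (0 :: i :: q) (pos_root F) (pos_nonroot hp) (root_prefix i q) (by simp)
        show ℓ (0 :: i :: q) ≤ m
        omega
    · intro p q hp hq hpre hne
      match p, q with
      | [], _ => exact (posF_nil _ hp).elim
      | i :: p', [] => exact (posF_nil _ hq).elim
      | i :: p', j :: q' =>
        exact s (0 :: i :: p') (0 :: j :: q') (pos_nonroot hp) (pos_nonroot hq)
          (List.cons_prefix_cons.2 ⟨rfl, hpre⟩) (by simpa using hne)
  · rintro ⟨z, b, s⟩
    refine ⟨addRoot m g, ⟨⟨?_, ?_, ?_⟩, rfl⟩, ?_⟩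
    · intro p hp
      match p with
      | [] => rfl
      | (j+1) :: q => rfl
      | 0 :: [] => exact (hp (pos_root F)).elim
      | 0 :: i :: q =>
        exact z (i :: q) (fun h => hp (pos_nonroot h))
    · intro p hp
      match p with
      | [] => exact (posF_nil _ hp).elim
      | (j+1) :: q => exact (posF_single_succ _ j q hp).elim
      | 0 :: [] =>
        show 1 ≤ m + 1 ∧ m + 1 ≤ m + 1
        omega
      | 0 :: i :: q =>
        have := b (i :: q) (pos_nonroot' hp)
        show 1 ≤ g (i :: q) ∧ g (i :: q) ≤ m + 1
        omega
    · intro p q hp hq hpre hne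
      match p, q with
      | [], _ => exact (posF_nil _ hp).elim
      | (j+1) :: p', _ => exact (posF_single_succ _ j p' hp).elim
      | 0 :: p', [] => exact (posF_nil _ hq).elim
      | 0 :: p', (j+1) :: q' => exact (posF_single_succ _ j q' hq).elim
      | 0 :: [], 0 :: [] => exact (hne rfl).elim
      | 0 :: [], 0 :: i :: q' =>
        have := b (i :: q') (pos_nonroot' hq)
        show g (i :: q') < m + 1
        omega
      | 0 :: i :: p', 0 :: [] =>
        obtain ⟨-, hpre'⟩ := List.cons_prefix_cons.1 hpre
        have := hpre'.length_le
        simp at this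
      | 0 :: i :: p', 0 :: j :: q' =>
        obtain ⟨-, hpre'⟩ := List.cons_prefix_cons.1 hpre
        exact s (i :: p') (j :: q') (pos_nonroot' hp) (pos_nonroot' hq) hpre'
          (by simpa using hne)
    · funext p
      match p with
      | [] => exact (z [] (posF_nil _)).symm
      | i :: q => rfl

lemma injOn_dropRoot (F : List PlaneTree) (m : ℕ) :
    Set.InjOn dropRoot {ℓ | ℓ ∈ LSet [PlaneTree.node F] (m+1) ∧ ℓ [0] = m + 1} := by
  rintro ℓ₁ ⟨⟨z₁, -, -⟩, r₁⟩ ℓ₂ ⟨⟨z₂, -, -⟩, r₂⟩ h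
  funext p
  match p with
  | [] => rw [z₁ [] (posF_nil _), z₂ [] (posF_nil _)]
  | (j+1) :: q => rw [z₁ _ (posF_single_succ _ j q), z₂ _ (posF_single_succ _ j q)]
  | 0 :: [] => rw [r₁, r₂]
  | 0 :: i :: q => exact congrFun h (i :: q)

/-- For a plane tree `T = B₊(T₁⋯T_k)`, the polynomial `χ_T` satisfies the finite
difference equation `Δχ_T(t) = χ_{T₁}(t)⋯χ_{T_k}(t)`, where `Δf(t) = f(t+1) - f(t)`:
stated at every natural number `t = m` (which determines the polynomial identity). -/
theorem chi_difference_equation (F : List PlaneTree) (m : ℕ) :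
    chiCount [PlaneTree.node F] (m + 1) =
      (F.map (fun t => chiCount [t] m)).prod + chiCount [PlaneTree.node F] m := by
  rw [← chiCount_forest, chiCount_eq_ncard, chiCount_eq_ncard, chiCount_eq_ncard, LSet_split]
  rw [Set.ncard_union_eq ?disj ?f1 ?f2]
  · rw [← Set.ncard_image_of_injOn (injOn_dropRoot F m), image_dropRoot]
  case disj =>
    rw [Set.disjoint_left]
    rintro ℓ ⟨-, hr⟩ ⟨-, b, -⟩
    have := (b [0] (pos_root F)).2
    omega
  case f1 =>
    exact Set.Finite.subset (finite_LSet [PlaneTree.node F] (m+1)) (fun ℓ h => h.1)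
  case f2 => exact finite_LSet [PlaneTree.node F] m

end PlaneTree
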